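/- arXiv:2604.08408 — 7 statements merged into one kernel-verified Lean document; each statement's English description precedes it below -/
import Mathlib

section
/- For any real numbers α, L > 0 and any integer k ≥ 0, define A_{k,t} for integers 0 ≤ k ≤ t by A_{k,t} = Σ over bitstrings c ∈ {0,1}^t with c_1+⋯+c_t = k of Π_{j∈[t]} ( [c_j=1] + [c_j=0]·(c_1+⋯+c_{j-1})·L ). Then Σ_{t≥k} (α^t/t!)·A_{k,t} = (1/k!)·((e^{αL}−1)/L)^k. -/
/-!
Splitting off the last bit of a bitstring gives `A_{k+1,t+1} = A_{k,t} + (k+1) L A_{k+1,t}`, the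
recursion of the Stirling numbers of the second kind, so `A_{k,t} L^k = L^t S(t,k)`. By
inclusion–exclusion `k! S(t,k) = ∑_j (-1)^(k-j) C(k,j) j^t`; summing against `(αL)^t / t!` turns
`j^t` into `e^{jαL}`, and the binomial theorem gives `(e^{αL} - 1)^k`.
-/

open Finset

/-- `A L k t` = sum over bitstrings `c ∈ {0,1}^t` with `k` ones of
`∏_{j∈[t]} ([c_j = 1] + [c_j = 0]·(c_1+⋯+c_{j-1})·L)`. (It vanishes for `t < k`.) -/
noncomputable def clusterA (L : ℝ) (k t : ℕ) : ℝ :=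
  ∑ c ∈ Finset.univ.filter
      (fun c : Fin t → Bool => (Finset.univ.filter (fun j => c j = true)).card = k),
    ∏ j : Fin t,
      (if c j = true then (1 : ℝ)
       else ((Finset.univ.filter (fun i : Fin t => i < j ∧ c i = true)).card : ℝ) * L)

def numTrue {t : ℕ} (c : Fin t → Bool) : ℕ := #{j | c j = true}

def numTrueBefore {t : ℕ} (c : Fin t → Bool) (j : Fin t) : ℕ := #{i | i < j ∧ c i = true}

noncomputable def clusterWeight (L : ℝ) {t : ℕ} (c : Fin t → Bool) : ℝ :=
  ∏ j, if c j = true then 1 else (numTrueBefore c j : ℝ) * L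

lemma clusterA_eq_sum_ite (L : ℝ) (k t : ℕ) :
    clusterA L k t = ∑ c : Fin t → Bool, if numTrue c = k then clusterWeight L c else 0 := by
  rw [clusterA, sum_filter]; rfl

section Snoc

variable {t : ℕ} (c : Fin t → Bool) (b : Bool)

lemma numTrue_snoc : numTrue (Fin.snoc c b : Fin (t + 1) → Bool) = numTrue c + b.toNat := by
  simp only [numTrue, card_filter, Fin.sum_univ_castSucc, Fin.snoc_castSucc, Fin.snoc_last]
  cases b <;> rfl

lemma numTrueBefore_snoc_castSucc (j : Fin t) :
    numTrueBefore (Fin.snoc c b : Fin (t + 1) → Bool) j.castSucc = numTrueBefore c j := by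
  simp only [numTrueBefore, card_filter, Fin.sum_univ_castSucc, Fin.snoc_castSucc, Fin.snoc_last,
    Fin.castSucc_lt_castSucc_iff, (Fin.castSucc_lt_last j).not_gt, false_and, if_false, add_zero]

lemma numTrueBefore_snoc_last :
    numTrueBefore (Fin.snoc c b : Fin (t + 1) → Bool) (Fin.last t) = numTrue c := by
  simp only [numTrueBefore, numTrue, card_filter, Fin.sum_univ_castSucc, Fin.snoc_castSucc,
    Fin.snoc_last, Fin.castSucc_lt_last, lt_irrefl, true_and, false_and, if_false, add_zero]

lemma clusterWeight_snoc (L : ℝ) :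
    clusterWeight L (Fin.snoc c b : Fin (t + 1) → Bool)
      = clusterWeight L c * if b then 1 else (numTrue c : ℝ) * L := by
  simp only [clusterWeight, Fin.prod_univ_castSucc, Fin.snoc_castSucc, Fin.snoc_last,
    numTrueBefore_snoc_castSucc, numTrueBefore_snoc_last]

end Snoc

lemma clusterA_succ (L : ℝ) (k t : ℕ) :
    clusterA L k (t + 1)
      = (∑ c : Fin t → Bool, if numTrue c + 1 = k then clusterWeight L c else 0)
        + k * L * clusterA L k t := by
  rw [clusterA_eq_sum_ite, clusterA_eq_sum_ite, mul_sum,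
    ← (Fin.snocEquiv fun _ => Bool).sum_comp, Fintype.sum_prod_type_right, ← sum_add_distrib]
  refine sum_congr rfl fun c _ => ?_
  simp only [Fin.snocEquiv, Equiv.coe_fn_mk, Fintype.sum_bool, numTrue_snoc, clusterWeight_snoc]
  split_ifs <;> simp_all [mul_comm]

lemma clusterA_zero_right (L : ℝ) (k : ℕ) : clusterA L k 0 = if k = 0 then 1 else 0 := by
  rw [clusterA_eq_sum_ite, Fintype.sum_unique]
  simp [numTrue, clusterWeight, @eq_comm _ 0 k]

lemma clusterA_zero_succ (L : ℝ) (t : ℕ) : clusterA L 0 (t + 1) = 0 := by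
  simp [clusterA_succ]

lemma clusterA_succ_succ (L : ℝ) (k t : ℕ) :
    clusterA L (k + 1) (t + 1) = clusterA L k t + (k + 1) * L * clusterA L (k + 1) t := by
  simp [clusterA_succ, clusterA_eq_sum_ite L k t]

theorem clusterA_mul_pow_eq_stirlingSecond (L : ℝ) (k t : ℕ) :
    clusterA L k t * L ^ k = L ^ t * Nat.stirlingSecond t k := by
  induction t generalizing k with
  | zero => cases k <;> simp [clusterA_zero_right]
  | succ t ih =>
    cases k with
    | zero => simp [clusterA_zero_succ]
    | succ k =>
      rw [clusterA_succ_succ, Nat.stirlingSecond_succ_succ]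
      push_cast
      linear_combination L * ih k + (k + 1) * L * ih (k + 1)

lemma Nat.succ_choose_mul_add_choose_mul (k j : ℕ) :
    (k + 1).choose j * j + k.choose j * (k + 1) = (k + 1).choose j * (k + 1) := by
  rcases le_or_gt j (k + 1) with hj | hj
  · rw [Nat.choose_mul_succ_eq, ← mul_add, Nat.add_sub_cancel' hj]
  · simp [Nat.choose_eq_zero_of_lt hj, Nat.choose_eq_zero_of_lt (by omega : k < j)]

section Surjections

variable (R : Type*) [CommRing R]

/-- Inclusion–exclusion count of the surjections `Fin n → Fin k`. -/
def surjCount (k n : ℕ) : R :=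
  ∑ j ∈ range (k + 1), (-1) ^ (k - j) * (k.choose j : R) * (j : R) ^ n

lemma surjCount_zero_right (k : ℕ) : surjCount R k 0 = if k = 0 then 1 else 0 := by
  have h := add_pow (1 : R) (-1) k
  simp only [one_pow, one_mul, add_neg_cancel, zero_pow_eq] at h
  simp only [surjCount, pow_zero, mul_one]
  split_ifs <;> simp_all [mul_comm]

lemma surjCount_zero_succ (n : ℕ) : surjCount R 0 (n + 1) = 0 := by
  simp [surjCount]

lemma surjCount_succ_succ (k n : ℕ) :
    surjCount R (k + 1) (n + 1) = (k + 1) * (surjCount R k n + surjCount R (k + 1) n) := by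
  have hlow : ∑ j ∈ range (k + 2), (-1) ^ (k + 1 - j) * (k.choose j : R) * (j : R) ^ n
      = -surjCount R k n := by
    rw [sum_range_succ, Nat.choose_succ_self, surjCount, ← sum_neg_distrib]
    simp only [Nat.cast_zero, mul_zero, zero_mul, add_zero]
    refine sum_congr rfl fun j hj => ?_
    rw [Nat.succ_sub (by simpa [Nat.lt_succ_iff] using hj), pow_succ]
    ring
  have hterm : ∀ j, (-1) ^ (k + 1 - j) * ((k + 1).choose j : R) * (j : R) ^ (n + 1)
      = (k + 1) * ((-1) ^ (k + 1 - j) * ((k + 1).choose j : R) * (j : R) ^ n)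
        - (k + 1) * ((-1) ^ (k + 1 - j) * (k.choose j : R) * (j : R) ^ n) := by
    intro j
    have h := congrArg (Nat.cast : ℕ → R) (Nat.succ_choose_mul_add_choose_mul k j)
    push_cast at h
    linear_combination (-1) ^ (k + 1 - j) * (j : R) ^ n * h
  conv_lhs => rw [surjCount, sum_congr rfl fun j _ => hterm j]
  rw [sum_sub_distrib, ← mul_sum, ← mul_sum, hlow]
  unfold surjCount
  ring

theorem factorial_mul_stirlingSecond_eq_surjCount (n k : ℕ) :
    (k.factorial * Nat.stirlingSecond n k : R) = surjCount R k n := by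
  induction n generalizing k with
  | zero => cases k <;> simp [surjCount_zero_right]
  | succ n ih =>
    cases k with
    | zero => simp [surjCount_zero_succ]
    | succ k =>
      rw [surjCount_succ_succ, ← ih, ← ih, Nat.stirlingSecond_succ_succ, Nat.factorial_succ]
      push_cast
      ring

end Surjections

lemma hasSum_surjCount_exp_sub_one_pow (x : ℝ) (k : ℕ) :
    HasSum (fun n => x ^ n / n.factorial * surjCount ℝ k n) ((Real.exp x - 1) ^ k) := by
  have hbinom : (Real.exp x - 1) ^ k
      = ∑ j ∈ range (k + 1), (-1) ^ (k - j) * (k.choose j : ℝ) * Real.exp (j * x) := by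
    rw [sub_eq_add_neg, add_pow]
    refine sum_congr rfl fun j _ => ?_
    rw [Real.exp_nat_mul]
    ring
  have hexp (j : ℕ) : HasSum (fun n => (j * x) ^ n / n.factorial) (Real.exp (j * x)) := by
    rw [Real.exp_eq_exp_ℝ]
    exact NormedSpace.expSeries_div_hasSum_exp _
  rw [hbinom]
  refine (hasSum_sum fun j _ => (hexp j).mul_left ((-1) ^ (k - j) * (k.choose j : ℝ))).congr_fun
    fun n => ?_
  rw [surjCount, mul_sum]
  refine sum_congr rfl fun j _ => ?_
  ring

theorem hasSum_stirlingSecond_exp_sub_one_pow (x : ℝ) (k : ℕ) :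
    HasSum (fun n => x ^ n / n.factorial * Nat.stirlingSecond n k)
      ((Real.exp x - 1) ^ k / k.factorial) := by
  refine ((hasSum_surjCount_exp_sub_one_pow x k).div_const _).congr_fun fun n => ?_
  rw [← factorial_mul_stirlingSecond_eq_surjCount]
  field_simp

theorem sum_clusterA_eq_general (α L : ℝ) (hL : 0 < L) (k : ℕ) :
    ∑' t : ℕ, α ^ t / (t.factorial : ℝ) * clusterA L k t
      = 1 / (k.factorial : ℝ) * ((Real.exp (α * L) - 1) / L) ^ k := by
  have hLk : L ^ k ≠ 0 := pow_ne_zero k hL.ne'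
  have hterm (t : ℕ) : α ^ t / t.factorial * clusterA L k t
      = (α * L) ^ t / t.factorial * Nat.stirlingSecond t k / L ^ k := by
    rw [eq_div_iff hLk, mul_pow]
    linear_combination α ^ t / t.factorial * clusterA_mul_pow_eq_stirlingSecond L k t
  rw [(((hasSum_stirlingSecond_exp_sub_one_pow (α * L) k).div_const _).congr_fun hterm).tsum_eq,
    div_pow]
  field_simp

/-- For any `α, L > 0` and integer `k ≥ 0`,
`Σ_{t≥k} (α^t/t!)·A_{k,t} = (1/k!)·((e^{αL}−1)/L)^k`
(the sum runs over all `t` since `A_{k,t} = 0` for `t < k`). -/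
theorem sum_clusterA_eq (α L : ℝ) (hα : 0 < α) (hL : 0 < L) (k : ℕ) :
    ∑' t : ℕ, α ^ t / (t.factorial : ℝ) * clusterA L k t
      = 1 / (k.factorial : ℝ) * ((Real.exp (α * L) - 1) / L) ^ k :=
  sum_clusterA_eq_general α L hL k
end

section
/- Let σ, β > 0 and let b₁(t) = (σ/(πβ)) ∫_0^∞ (e^{−2σ²(t+u)²} − e^{−2σ²(t−u)²})/sinh(2πu/β) du. Then ∫_{−∞}^{∞} |b₁(t)| dt ≤ (1/(√2·π^{3/2}))·( 2/√π + log(1 + (√2/π)·σβ) ). -/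
/-!
Write `b₁(t) = C ∫₀^∞ (g(t+u) - g(t-u)) / sinh(cu) du` with `g` the Gaussian `e^{-2σ²x²}`.
By Tonelli, `∫ |b₁| ≤ C ∫₀^∞ m(u) / sinh(cu) du` with `m(u) = ∫ |g(t+u) - g(t-u)| dt`.
Since `g` is even and decreasing on `[0, ∞)`, the sign of `g(t+u) - g(t-u)` is that of `-t`, so
`m(u) = 2 ∫_{-u}^{u} g ≤ min (4u) (2 ‖g‖₁)`. Splitting the `u`-integral at `U`, the part `u ≤ U`
is at most `4U/c` because `u / sinh(cu) ≤ 1/c`, and the tail is at most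
`2 ‖g‖₁ log(1 + 2/(cU)) / c`, computed with the antiderivative `log tanh(cu/2) / c` of `1/sinh(cu)`.
-/

open MeasureTheory Set Filter Real Topology
open scoped ENNReal

theorem integral_Ioi_comp_add_right {E : Type*} [NormedAddCommGroup E] [NormedSpace ℝ E]
    (g : ℝ → E) (a u : ℝ) :
    ∫ t in Ioi a, g (t + u) = ∫ t in Ioi (a + u), g t := by
  have := (measurePreserving_add_right volume u).setIntegral_preimage_emb
    (MeasurableEquiv.addRight u).measurableEmbedding g (Ioi (a + u))
  simpa [preimage_add_const_Ioi] using this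

theorem integral_abs_sub_comp_shift {g : ℝ → ℝ} (hg : Integrable g) (heven : g.Even)
    (hanti : AntitoneOn g (Ici 0)) {u : ℝ} (hu : 0 ≤ u) :
    ∫ t, |g (t + u) - g (t - u)| = 2 * ∫ x in -u..u, g x := by
  have hsign : ∀ t, 0 ≤ t → g (t + u) ≤ g (t - u) := by
    intro t ht
    rcases le_total u t with hut | htu
    · exact hanti (sub_nonneg.2 hut) (by simp; positivity) (by linarith)
    · rw [← heven (t - u), neg_sub]
      exact hanti (sub_nonneg.2 htu) (by simp; positivity) (by linarith)
  have habs : ∀ t, |g (|t| + u) - g (|t| - u)| = |g (t + u) - g (t - u)| := by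
    intro t
    rcases le_total 0 t with ht | ht
    · rw [abs_of_nonneg ht]
    · rw [abs_of_nonpos ht, abs_sub_comm, ← heven (-t + u), ← heven (-t - u)]
      ring_nf
  calc ∫ t, |g (t + u) - g (t - u)|
      = ∫ t, |g (|t| + u) - g (|t| - u)| := by simp_rw [habs]
    _ = 2 * ∫ t in Ioi 0, (g (t + -u) - g (t + u)) := by
        rw [integral_comp_abs (f := fun t => |g (t + u) - g (t - u)|)]
        congr 1
        refine setIntegral_congr_fun measurableSet_Ioi fun t ht => ?_
        rw [abs_sub_comm, abs_of_nonneg (sub_nonneg.2 (hsign t (le_of_lt ht))), sub_eq_add_neg t u]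
    _ = 2 * ∫ x in -u..u, g x := by
        rw [integral_sub ((hg.comp_add_right _).integrableOn) ((hg.comp_add_right _).integrableOn),
          integral_Ioi_comp_add_right, integral_Ioi_comp_add_right, zero_add, zero_add,
          intervalIntegral.integral_Ioi_sub_Ioi hg.integrableOn (by linarith)]

theorem lintegral_enorm_sub_comp_shift {g : ℝ → ℝ} (hg : Integrable g) (heven : g.Even)
    (hanti : AntitoneOn g (Ici 0)) {u : ℝ} (hu : 0 ≤ u) :
    ∫⁻ t, ‖g (t + u) - g (t - u)‖ₑ = ENNReal.ofReal (2 * ∫ x in -u..u, g x) := by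
  rw [← integral_abs_sub_comp_shift hg heven hanti hu]
  exact (ofReal_integral_norm_eq_lintegral_enorm (f := fun t => g (t + u) - g (t - u))
    ((hg.comp_add_right u).sub (hg.comp_sub_right u))).symm

theorem lintegral_enorm_integral_le {α β E : Type*} [MeasurableSpace α] [MeasurableSpace β]
    [NormedAddCommGroup E] [NormedSpace ℝ E] {μ : Measure α} {ν : Measure β} [SFinite μ]
    [SFinite ν] {F : α → β → E} (hF : AEStronglyMeasurable (Function.uncurry F) (μ.prod ν)) :
    ∫⁻ x, ‖∫ y, F x y ∂ν‖ₑ ∂μ ≤ ∫⁻ y, ∫⁻ x, ‖F x y‖ₑ ∂μ ∂ν :=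
  (lintegral_mono fun _ => enorm_integral_le_lintegral_enorm _).trans_eq
    (lintegral_lintegral_swap hF.enorm)

theorem lintegral_enorm_gaussian_shift_sub_le {a u : ℝ} (ha : 0 < a) (hu : 0 ≤ u) :
    ∫⁻ t, ‖exp (-a * (t + u) ^ 2) - exp (-a * (t - u) ^ 2)‖ₑ
      ≤ ENNReal.ofReal (min (4 * u) (2 * √(π / a))) := by
  have hg : Integrable fun x => exp (-a * x ^ 2) := integrable_exp_neg_mul_sq ha
  have heven : Function.Even fun x => exp (-a * x ^ 2) := fun x => by simp
  have hanti : AntitoneOn (fun x => exp (-a * x ^ 2)) (Ici 0) := fun x hx y _ hxy => by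
    simp only [exp_le_exp]
    nlinarith [mul_le_mul hxy hxy (mem_Ici.1 hx) (hxy.trans' (mem_Ici.1 hx))]
  rw [lintegral_enorm_sub_comp_shift hg heven hanti hu]
  refine ENNReal.ofReal_le_ofReal (le_min ?_ ?_)
  · have := intervalIntegral.norm_integral_le_of_norm_le_const (a := -u) (b := u)
      (f := fun x => exp (-a * x ^ 2)) (C := 1) fun x _ => by
        rw [norm_of_nonneg (exp_pos _).le, exp_le_one_iff]
        nlinarith [sq_nonneg x]
    rw [Real.norm_eq_abs, abs_of_nonneg (by linarith : 0 ≤ u - -u)] at this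
    linarith [le_abs_self (∫ x in -u..u, exp (-a * x ^ 2))]
  · rw [intervalIntegral.integral_of_le (by linarith), ← integral_gaussian a]
    exact mul_le_mul_of_nonneg_left
      (setIntegral_le_integral hg (ae_of_all _ fun x => (exp_pos _).le)) zero_le_two

theorem log_one_add_exp_neg_sub_log_one_sub_exp_neg_le {x : ℝ} (hx : 0 < x) :
    log (1 + exp (-x)) - log (1 - exp (-x)) ≤ log (1 + 2 / x) := by
  have he : exp (-x) < 1 := exp_lt_one_iff.2 (by linarith)
  have hexp : exp x * exp (-x) = 1 := by rw [← exp_add, add_neg_cancel, exp_zero]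
  -- `(1 + e⁻ˣ) / (1 - e⁻ˣ) = 1 + 2 / (eˣ - 1)` and `x ≤ eˣ - 1`
  have hkey : (x + 1) * exp (-x) ≤ 1 := by nlinarith [add_one_le_exp x, exp_pos (-x)]
  rw [← log_div (by positivity) (by linarith)]
  refine log_le_log (div_pos (by positivity) (by linarith)) ?_
  rw [div_le_iff₀ (by linarith), ← sub_nonneg]
  have : (1 + 2 / x) * (1 - exp (-x)) - (1 + exp (-x)) = 2 / x * (1 - (x + 1) * exp (-x)) := by
    field_simp; ring
  rw [this]
  exact mul_nonneg (by positivity) (by linarith)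

/-- `log (1 - e⁻ˣ) - log (1 + e⁻ˣ) = log (tanh (x / 2))`, the antiderivative of `1 / sinh`. -/
theorem hasDerivAt_log_one_sub_exp_neg_sub_log_one_add_exp_neg {x : ℝ} (hx : 0 < x) :
    HasDerivAt (fun x => log (1 - exp (-x)) - log (1 + exp (-x))) (sinh x)⁻¹ x := by
  have he : exp (-x) < 1 := exp_lt_one_iff.2 (by linarith)
  have hE : HasDerivAt (fun x => exp (-x)) (-exp (-x)) x := by
    simpa using (hasDerivAt_neg x).exp
  have hsub := ((hE.const_sub 1).log (by linarith)).sub ((hE.const_add 1).log (by positivity))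
  refine hsub.congr_deriv ?_
  have h1 : 1 - exp (-x) ≠ 0 := by linarith
  have h2 : 1 - exp (-x) ^ 2 ≠ 0 := by nlinarith [exp_pos (-x)]
  rw [sinh_eq, ← inv_inv (exp x), ← exp_neg]
  field_simp
  ring

theorem lintegral_Ioi_enorm_inv_sinh_le {c U : ℝ} (hc : 0 < c) (hU : 0 < U) :
    ∫⁻ u in Ioi U, ‖(sinh (c * u))⁻¹‖ₑ ≤ ENNReal.ofReal (log (1 + 2 / (c * U)) / c) := by
  set F : ℝ → ℝ := fun u => (log (1 - exp (-(c * u))) - log (1 + exp (-(c * u)))) / c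
  have hderiv : ∀ u ∈ Ici U, HasDerivAt F (sinh (c * u))⁻¹ u := fun u hu =>
    (((hasDerivAt_log_one_sub_exp_neg_sub_log_one_add_exp_neg
      (mul_pos hc (hU.trans_le hu))).comp u ((hasDerivAt_id u).const_mul c)).div_const c).congr_deriv
      (by field_simp)
  have hpos : ∀ u ∈ Ioi U, 0 ≤ (sinh (c * u))⁻¹ := fun u hu =>
    inv_nonneg.2 (sinh_nonneg_iff.2 (mul_pos hc (hU.trans hu)).le)
  have hlim : Tendsto F atTop (𝓝 0) := by
    have hT : Tendsto (fun u => exp (-(c * u))) atTop (𝓝 0) :=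
      tendsto_exp_atBot.comp (tendsto_neg_atTop_atBot.comp (tendsto_id.const_mul_atTop hc))
    have hcont : ContinuousAt (fun y => (log (1 - y) - log (1 + y)) / c) 0 := by
      fun_prop (disch := norm_num)
    simpa [F, Function.comp_def] using hcont.tendsto.comp hT
  rw [setLIntegral_congr_fun measurableSet_Ioi fun u hu => Real.enorm_of_nonneg (hpos u hu),
    ← ofReal_integral_eq_lintegral_ofReal (integrableOn_Ioi_deriv_of_nonneg' hderiv hpos hlim)
      (ae_restrict_of_forall_mem measurableSet_Ioi hpos),
    integral_Ioi_of_hasDerivAt_of_nonneg' hderiv hpos hlim]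
  refine ENNReal.ofReal_le_ofReal ?_
  rw [zero_sub, ← neg_div, neg_sub]
  exact div_le_div_of_nonneg_right
    (log_one_add_exp_neg_sub_log_one_sub_exp_neg_le (mul_pos hc hU)) hc.le

theorem mul_mul_inv_sinh_le {A c u : ℝ} (hA : 0 ≤ A) (hc : 0 < c) (hu : 0 < u) :
    A * u * (sinh (c * u))⁻¹ ≤ A / c := by
  have hcu : 0 < c * u := mul_pos hc hu
  rw [← div_eq_mul_inv, div_le_div_iff₀ (sinh_pos_iff.2 hcu) hc, mul_assoc]
  exact mul_le_mul_of_nonneg_left (by linarith [self_lt_sinh_iff.2 hcu]) hA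

theorem lintegral_Ioi_mul_enorm_inv_sinh_le {m : ℝ → ℝ≥0∞} {A B c U : ℝ} (hA : 0 ≤ A)
    (hB : 0 ≤ B) (hc : 0 < c) (hU : 0 < U)
    (hm : ∀ u, 0 < u → m u ≤ ENNReal.ofReal (min (A * u) B)) :
    ∫⁻ u in Ioi 0, m u * ‖(sinh (c * u))⁻¹‖ₑ
      ≤ ENNReal.ofReal (A * U / c + B * (log (1 + 2 / (c * U)) / c)) := by
  have hlog : 0 ≤ log (1 + 2 / (c * U)) := log_nonneg (by simp; positivity)
  rw [← Ioc_union_Ioi_eq_Ioi hU.le, lintegral_union measurableSet_Ioi Ioc_disjoint_Ioi_same,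
    ENNReal.ofReal_add (by positivity) (by positivity)]
  gcongr ?_ + ?_
  · have hpt : ∀ u ∈ Ioc 0 U, m u * ‖(sinh (c * u))⁻¹‖ₑ ≤ ENNReal.ofReal (A / c) := by
      intro u hu
      have hsinh : 0 < sinh (c * u) := sinh_pos_iff.2 (mul_pos hc hu.1)
      rw [Real.enorm_of_nonneg (inv_nonneg.2 hsinh.le)]
      calc m u * ENNReal.ofReal (sinh (c * u))⁻¹
          ≤ ENNReal.ofReal (A * u) * ENNReal.ofReal (sinh (c * u))⁻¹ := by
            gcongr; exact (hm u hu.1).trans (ENNReal.ofReal_le_ofReal (min_le_left _ _))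
        _ = ENNReal.ofReal (A * u * (sinh (c * u))⁻¹) :=
            (ENNReal.ofReal_mul (mul_nonneg hA hu.1.le)).symm
        _ ≤ ENNReal.ofReal (A / c) :=
            ENNReal.ofReal_le_ofReal (mul_mul_inv_sinh_le hA hc hu.1)
    calc ∫⁻ u in Ioc 0 U, m u * ‖(sinh (c * u))⁻¹‖ₑ ≤ ∫⁻ u in Ioc 0 U, ENNReal.ofReal (A / c) :=
          setLIntegral_mono' measurableSet_Ioc hpt
      _ = ENNReal.ofReal (A * U / c) := by
          rw [setLIntegral_const, Real.volume_Ioc, sub_zero, ← ENNReal.ofReal_mul (by positivity)]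
          ring_nf
  · calc ∫⁻ u in Ioi U, m u * ‖(sinh (c * u))⁻¹‖ₑ
        ≤ ∫⁻ u in Ioi U, ENNReal.ofReal B * ‖(sinh (c * u))⁻¹‖ₑ :=
          setLIntegral_mono' measurableSet_Ioi fun u hu => by
            gcongr; exact (hm u (hU.trans hu)).trans (ENNReal.ofReal_le_ofReal (min_le_right _ _))
      _ = ENNReal.ofReal B * ∫⁻ u in Ioi U, ‖(sinh (c * u))⁻¹‖ₑ :=
          lintegral_const_mul' _ _ ENNReal.ofReal_ne_top
      _ ≤ ENNReal.ofReal B * ENNReal.ofReal (log (1 + 2 / (c * U)) / c) := by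
          gcongr; exact lintegral_Ioi_enorm_inv_sinh_le hc hU
      _ = ENNReal.ofReal (B * (log (1 + 2 / (c * U)) / c)) := (ENNReal.ofReal_mul hB).symm

theorem integral_abs_gaussian_sinh_kernel_le {a c C U : ℝ} (ha : 0 < a) (hc : 0 < c)
    (hC : 0 ≤ C) (hU : 0 < U) {b : ℝ → ℝ}
    (hb : ∀ t, b t = C * ∫ u in Ioi 0,
      (exp (-a * (t + u) ^ 2) - exp (-a * (t - u) ^ 2)) * (sinh (c * u))⁻¹) :
    ∫ t, |b t| ≤ C * (4 * U / c + 2 * √(π / a) * (log (1 + 2 / (c * U)) / c)) := by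
  set F : ℝ → ℝ → ℝ := fun t u =>
    (exp (-a * (t + u) ^ 2) - exp (-a * (t - u) ^ 2)) * (sinh (c * u))⁻¹
  have hF : Measurable (Function.uncurry F) := by
    simp only [F, Function.uncurry_def]
    fun_prop
  have hbound : ∫⁻ t, ‖b t‖ₑ
      ≤ ENNReal.ofReal (C * (4 * U / c + 2 * √(π / a) * (log (1 + 2 / (c * U)) / c))) :=
    calc ∫⁻ t, ‖b t‖ₑ = ENNReal.ofReal C * ∫⁻ t, ‖∫ u in Ioi 0, F t u‖ₑ := by
          simp_rw [hb, enorm_mul, Real.enorm_of_nonneg hC]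
          exact lintegral_const_mul' _ _ ENNReal.ofReal_ne_top
      _ ≤ ENNReal.ofReal C * ∫⁻ u in Ioi 0, ∫⁻ t, ‖F t u‖ₑ := by
          gcongr ENNReal.ofReal C * ?_
          exact lintegral_enorm_integral_le (μ := volume) (ν := volume.restrict (Ioi 0))
            hF.aestronglyMeasurable
      _ = ENNReal.ofReal C * ∫⁻ u in Ioi 0,
            (∫⁻ t, ‖exp (-a * (t + u) ^ 2) - exp (-a * (t - u) ^ 2)‖ₑ) *
              ‖(sinh (c * u))⁻¹‖ₑ := by
          simp_rw [F, enorm_mul]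
          congr 1
          exact lintegral_congr fun u => lintegral_mul_const' _ _ enorm_ne_top
      _ ≤ ENNReal.ofReal C *
            ENNReal.ofReal (4 * U / c + 2 * √(π / a) * (log (1 + 2 / (c * U)) / c)) := by
          gcongr
          exact lintegral_Ioi_mul_enorm_inv_sinh_le (by norm_num) (by positivity) hc hU
            fun u hu => lintegral_enorm_gaussian_shift_sub_le ha hu.le
      _ = _ := (ENNReal.ofReal_mul hC).symm
  have hlog : 0 ≤ log (1 + 2 / (c * U)) := log_nonneg (by simp; positivity)
  calc ∫ t, |b t| ≤ ‖∫ t, |b t|‖ := le_abs_self _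
    _ ≤ (∫⁻ t, ENNReal.ofReal ‖|b t|‖).toReal := norm_integral_le_lintegral_norm _
    _ ≤ _ := ENNReal.toReal_le_of_le_ofReal (by positivity) <| by
        simpa only [norm_abs_eq_norm, ofReal_norm] using hbound

/-- `L¹`-norm bound for the kernel
`b₁(t) = (σ/(πβ)) ∫_0^∞ (e^{−2σ²(t+u)²} − e^{−2σ²(t−u)²})/sinh(2πu/β) du`:
`∫ |b₁(t)| dt ≤ (1/(√2·π^{3/2}))·( 2/√π + log(1 + (√2/π)·σβ) )`. -/
theorem b1_L1_bound (σ β : ℝ) (hσ : 0 < σ) (hβ : 0 < β) (b₁ : ℝ → ℝ)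
    (hb₁ : ∀ t : ℝ, b₁ t
      = σ / (Real.pi * β) *
        ∫ u in Set.Ioi (0 : ℝ),
          (Real.exp (-2 * σ ^ 2 * (t + u) ^ 2) - Real.exp (-2 * σ ^ 2 * (t - u) ^ 2))
            / Real.sinh (2 * Real.pi * u / β)) :
    ∫ t : ℝ, |b₁ t|
      ≤ 1 / (Real.sqrt 2 * Real.pi ^ ((3 : ℝ) / 2)) *
        (2 / Real.sqrt Real.pi + Real.log (1 + Real.sqrt 2 / Real.pi * (σ * β))) := by
  have hb : ∀ t, b₁ t = σ / (π * β) * ∫ u in Ioi 0,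
      (exp (-(2 * σ ^ 2) * (t + u) ^ 2) - exp (-(2 * σ ^ 2) * (t - u) ^ 2)) *
        (sinh (2 * π / β * u))⁻¹ := fun t => by
    rw [hb₁ t]
    congr 1
    refine integral_congr_ae (ae_of_all _ fun u => ?_)
    simp only [div_eq_mul_inv]
    ring_nf
  -- splitting at `U = 1 / (√2 σ)` makes `2 / (c U) = √2 σ β / π`
  refine (integral_abs_gaussian_sinh_kernel_le (by positivity) (by positivity) (by positivity)
    (by positivity : 0 < 1 / (√2 * σ)) hb).trans_eq ?_
  have hspi : √π ^ 2 = π := sq_sqrt pi_pos.le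
  have harg : 2 / (2 * π / β * (1 / (√2 * σ))) = √2 / π * (σ * β) := by field_simp
  have hK : √(π / (2 * σ ^ 2)) = √π / (√2 * σ) := by
    rw [sqrt_div' _ (by positivity), sqrt_mul zero_le_two, sqrt_sq hσ.le]
  have hP : π ^ ((3 : ℝ) / 2) = π * √π := by
    rw [sqrt_eq_rpow, ← rpow_one_add' pi_pos.le (by norm_num)]
    norm_num
  rw [harg, hK, hP]
  field_simp
  rw [hspi]
  ring
end

section
/- Let W = Σ_{a∈[m]} W_a be a Hamiltonian on n qubits where each term W_a has support of size at most L, and each site is acted on by at most D terms. For an integer k ≥ 1, call a ∈ [m]^k a cluster of length k from site 1 if 1 ∈ supp(W_{a₁}) and for each ℓ = 2,…,k, supp(W_{a_ℓ}) intersects the union of supp(W_{a_j}) for j < ℓ. Then the number of clusters of length k from site 1 is at most D^k · L^{k−1} · (k−1)!. -/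
/-!
A cluster of length `k + 2` is a cluster `t` of length `k + 1` followed by an edge meeting
`E (t 0) ∪ ⋯ ∪ E (t k)`. That union has at most `(k + 1) L` vertices, each lying in at most `D`
edges, so every cluster has at most `(k + 1) L D` extensions; induction on `k` gives the bound.
-/

open Finset

namespace Cluster

variable {α ι : Type*} [DecidableEq α]

def IsCluster (v₀ : α) (E : ι → Finset α) {k : ℕ} (a : Fin (k + 1) → ι) : Prop :=
  v₀ ∈ E (a 0) ∧ ∀ ℓ : Fin (k + 1), 0 < ℓ.1 → ∃ x ∈ E (a ℓ), ∃ j < ℓ, x ∈ E (a j)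

instance (v₀ : α) (E : ι → Finset α) {k : ℕ} (a : Fin (k + 1) → ι) :
    Decidable (IsCluster v₀ E a) := by
  unfold IsCluster; infer_instance

theorem isCluster_snoc_iff {v₀ : α} {E : ι → Finset α} {k : ℕ} {t : Fin (k + 1) → ι} {b : ι} :
    IsCluster v₀ E (Fin.snoc t b : Fin (k + 2) → ι) ↔
      IsCluster v₀ E t ∧ ∃ x ∈ E b, x ∈ univ.biUnion fun j => E (t j) := by
  have not_last_lt (i : Fin (k + 2)) : ¬ Fin.last (k + 1) < i := not_lt.mpr (Fin.le_last i)
  rw [IsCluster, IsCluster, ← Fin.castSucc_zero, Fin.forall_fin_succ' (n := k + 1)]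
  simp only [Fin.exists_fin_succ' (n := k + 1), Fin.snoc_castSucc, Fin.snoc_last,
    Fin.castSucc_lt_castSucc_iff, Fin.castSucc_lt_last, not_last_lt, false_and, or_false,
    true_and, Fin.val_last, Fin.val_castSucc, mem_biUnion, mem_univ, Nat.zero_lt_succ,
    forall_const, and_assoc]

variable [Fintype ι] [DecidableEq ι]

def clusters (v₀ : α) (E : ι → Finset α) (k : ℕ) : Finset (Fin (k + 1) → ι) :=
  univ.filter (IsCluster v₀ E)

theorem card_filter_meets_le {E : ι → Finset α} {D : ℕ}
    (hD : ∀ v, (univ.filter fun b => v ∈ E b).card ≤ D) (U : Finset α) :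
    (univ.filter fun b => ∃ x ∈ E b, x ∈ U).card ≤ U.card * D := by
  calc (univ.filter fun b => ∃ x ∈ E b, x ∈ U).card
      ≤ (U.biUnion fun v => univ.filter fun b => v ∈ E b).card := by
        refine card_le_card fun b hb => ?_
        obtain ⟨x, hxb, hxU⟩ := (mem_filter.mp hb).2
        exact mem_biUnion.mpr ⟨x, hxU, mem_filter.mpr ⟨mem_univ b, hxb⟩⟩
    _ ≤ U.card * D := card_biUnion_le_card_mul _ _ _ fun v _ => hD v

theorem card_clusters_zero_le {v₀ : α} {E : ι → Finset α} {D : ℕ}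
    (hD : (univ.filter fun b => v₀ ∈ E b).card ≤ D) :
    (clusters v₀ E 0).card ≤ D := by
  calc (clusters v₀ E 0).card
      ≤ ((univ.filter fun b => v₀ ∈ E b).image fun b _ => b).card := by
        refine card_le_card fun a ha => mem_image.mpr ⟨a 0, ?_, ?_⟩
        · exact mem_filter.mpr ⟨mem_univ _, (mem_filter.mp ha).2.1⟩
        · exact funext fun i => by rw [Fin.fin_one_eq_zero i]
    _ ≤ D := card_image_le.trans hD

theorem card_clusters_succ_le {v₀ : α} {E : ι → Finset α} {L D : ℕ}
    (hL : ∀ b, (E b).card ≤ L) (hD : ∀ v, (univ.filter fun b => v ∈ E b).card ≤ D) (k : ℕ) :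
    (clusters v₀ E (k + 1)).card ≤ (clusters v₀ E k).card * ((k + 1) * L * D) := by
  let extensions (t : Fin (k + 1) → ι) : Finset ι :=
    univ.filter fun b => ∃ x ∈ E b, x ∈ univ.biUnion fun j => E (t j)
  have card_extensions_le (t : Fin (k + 1) → ι) : (extensions t).card ≤ (k + 1) * L * D :=
    calc (extensions t).card ≤ (univ.biUnion fun j => E (t j)).card * D :=
          card_filter_meets_le hD _
      _ ≤ (k + 1) * L * D := by
          gcongr
          simpa using card_biUnion_le_card_mul univ (fun j => E (t j)) L fun j _ => hL (t j)
  have subset : clusters v₀ E (k + 1) ⊆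
      (clusters v₀ E k).biUnion fun t => (extensions t).image fun b => (Fin.snoc t b : Fin (k + 2) → ι) := by
    intro a ha
    rw [← Fin.snoc_init_self a] at ha ⊢
    obtain ⟨hinit, hlast⟩ := isCluster_snoc_iff.mp (mem_filter.mp ha).2
    exact mem_biUnion.mpr ⟨Fin.init a, mem_filter.mpr ⟨mem_univ _, hinit⟩,
      mem_image_of_mem _ (mem_filter.mpr ⟨mem_univ _, hlast⟩)⟩
  calc (clusters v₀ E (k + 1)).card
      ≤ ((clusters v₀ E k).biUnion fun t => (extensions t).image fun b => (Fin.snoc t b : Fin (k + 2) → ι)).card :=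
        card_le_card subset
    _ ≤ (clusters v₀ E k).card * ((k + 1) * L * D) :=
        card_biUnion_le_card_mul _ _ _ fun t _ => card_image_le.trans (card_extensions_le t)

theorem card_clusters_le {v₀ : α} {E : ι → Finset α} {L D : ℕ}
    (hL : ∀ b, (E b).card ≤ L) (hD : ∀ v, (univ.filter fun b => v ∈ E b).card ≤ D) (k : ℕ) :
    (clusters v₀ E k).card ≤ D ^ (k + 1) * L ^ k * k.factorial := by
  induction k with
  | zero => simpa using card_clusters_zero_le (hD v₀)
  | succ k ih =>
    calc (clusters v₀ E (k + 1)).card ≤ (clusters v₀ E k).card * ((k + 1) * L * D) :=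
          card_clusters_succ_le hL hD k
      _ ≤ D ^ (k + 1) * L ^ k * k.factorial * ((k + 1) * L * D) := by gcongr
      _ = D ^ (k + 2) * L ^ (k + 1) * (k + 1).factorial := by
          rw [Nat.factorial_succ]; ring

end Cluster

open Cluster in
/-- Counting clusters. Given a hypergraph on `Fin n` with hyperedges
`E a` (`a : Fin m`) of size at most `L`, each vertex lying in at most `D` hyperedges,
the number of sequences `(a₁,…,a_k)` with `v₀ ∈ E a₁` and each `E a_ℓ` (`ℓ ≥ 2`)
intersecting `E a₁ ∪ ⋯ ∪ E a_{ℓ−1}` is at most `D^k · L^{k−1} · (k−1)!`. -/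
theorem cluster_count (n m L D k : ℕ) (hk : 1 ≤ k) (v₀ : Fin n)
    (E : Fin m → Finset (Fin n))
    (hL : ∀ a, (E a).card ≤ L)
    (hD : ∀ v : Fin n, (Finset.univ.filter (fun a => v ∈ E a)).card ≤ D) :
    Nat.card {a : Fin k → Fin m //
        v₀ ∈ E (a ⟨0, by omega⟩) ∧
        ∀ ℓ : Fin k, 0 < ℓ.1 →
          ∃ x, x ∈ E (a ℓ) ∧ ∃ j : Fin k, j < ℓ ∧ x ∈ E (a j)}
      ≤ D ^ k * L ^ (k - 1) * (k - 1).factorial := by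
  obtain ⟨k, rfl⟩ : ∃ k', k = k' + 1 := ⟨k - 1, by omega⟩
  change Nat.card {a : Fin (k + 1) → Fin m // IsCluster v₀ E a} ≤ _
  rw [Nat.card_eq_fintype_card, Fintype.card_subtype]
  exact card_clusters_le hL hD k
end

section
/- Let P be an orthogonal projector (P² = P, P† = P) on a finite-dimensional Hilbert space, and let β, h ≥ 0. Consider the operator H = h·(I ⊗ |1⟩⟨1|) + P ⊗ |0⟩⟨0| on the system tensored with one ancilla qubit. Then the partial trace over the ancilla of exp(−βH) equals exp(−βP) + e^{−βh}·I = (1 + e^{−βh})·exp(−β_eff·P), where β_eff = log((1 + e^{−βh})/(e^{−β} + e^{−βh})). -/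
open Kronecker Matrix

/-- Partial trace over a single ancilla qubit (the second tensor factor). -/
noncomputable def ptrAncilla {n : Type*} [Fintype n]
    (M : Matrix (n × Fin 2) (n × Fin 2) ℂ) : Matrix n n ℂ :=
  Matrix.of fun i j => ∑ s : Fin 2, M (i, s) (j, s)

/-- The rank-one projector `|0⟩⟨0|` on one qubit. -/
def ket0bra0 : Matrix (Fin 2) (Fin 2) ℂ := !![1, 0; 0, 0]
/-- The rank-one projector `|1⟩⟨1|` on one qubit. -/
def ket1bra1 : Matrix (Fin 2) (Fin 2) ℂ := !![0, 0; 0, 1]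

/-!
On the ancilla the Hamiltonian is block diagonal, `H = blockDiagonal ![P, h • 1]`, so `exp (-βH)`
is block diagonal with blocks `exp (-βP)` and `e^{-βh} • 1`, and the partial trace adds the blocks.
For the second form, an idempotent `Q` satisfies `exp (c • Q) = 1 - Q + e^c • Q`, so both sides are
combinations of `1` and `P`, and the coefficients of `P` agree because
`(1 + e^{-βh}) e^{-β_eff} = e^{-β} + e^{-βh}`.
-/

open NormedSpace

theorem IsIdempotentElem.exp_smul_eq {𝕂 𝔸 : Type*} [RCLike 𝕂] [NormedRing 𝔸] [NormedAlgebra 𝕂 𝔸]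
    [CompleteSpace 𝔸] {Q : 𝔸} (hQ : IsIdempotentElem Q) (c : 𝕂) :
    exp (c • Q) = 1 - Q + exp c • Q := by
  have hterm : ∀ k : ℕ, (k.factorial⁻¹ : 𝕂) • (c • Q) ^ k
      = (if k = 0 then 1 - Q else 0) + ((k.factorial⁻¹ : 𝕂) * c ^ k) • Q := by
    rintro (_ | k)
    · simp
    · rw [smul_pow, hQ.pow_succ_eq, smul_smul]; simp
  refine (exp_series_hasSum_exp' (𝕂 := 𝕂) (c • Q)).unique ?_
  simp_rw [hterm]
  exact (hasSum_ite_eq 0 (1 - Q)).add ((exp_series_hasSum_exp' (𝕂 := 𝕂) c).smul_const Q)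

theorem Matrix.exp_smul_of_isIdempotentElem {m 𝕂 : Type*} [Fintype m] [DecidableEq m] [RCLike 𝕂]
    {Q : Matrix m m 𝕂} (hQ : IsIdempotentElem Q) (c : 𝕂) :
    exp (c • Q) = 1 - Q + exp c • Q :=
  open scoped Norms.Operator in hQ.exp_smul_eq c

theorem Matrix.exp_smul_one {m 𝕂 : Type*} [Fintype m] [DecidableEq m] [RCLike 𝕂] (c : 𝕂) :
    exp (c • (1 : Matrix m m 𝕂)) = exp c • 1 := by
  simpa using exp_smul_of_isIdempotentElem (IsIdempotentElem.one (M := Matrix m m 𝕂)) c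

theorem ptrAncilla_blockDiagonal {n : Type*} [Fintype n] (d : Fin 2 → Matrix n n ℂ) :
    ptrAncilla (blockDiagonal d) = ∑ s, d s := by
  ext i j
  simp [ptrAncilla, blockDiagonal_apply, Matrix.sum_apply]

theorem kronecker_ket0bra0_add_kronecker_ket1bra1 {n : Type*} (A B : Matrix n n ℂ) :
    A ⊗ₖ ket0bra0 + B ⊗ₖ ket1bra1 = blockDiagonal ![A, B] := by
  ext ⟨i, s⟩ ⟨j, t⟩
  fin_cases s <;> fin_cases t <;> simp [ket0bra0, ket1bra1, blockDiagonal_apply]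

theorem ptrAncilla_exp_blockDiagonal {n : Type*} [Fintype n] [DecidableEq n]
    (d : Fin 2 → Matrix n n ℂ) :
    ptrAncilla (exp (blockDiagonal d)) = ∑ s, exp (d s) := by
  rw [exp_blockDiagonal, ptrAncilla_blockDiagonal]
  exact Fintype.sum_congr _ _ fun s => open scoped Norms.Operator in Pi.coe_exp d s

theorem Real.mul_exp_neg_log_div {p q : ℝ} (hp : 0 < p) (hq : 0 < q) :
    p * Real.exp (-Real.log (p / q)) = q := by
  rw [Real.exp_neg, Real.exp_log (div_pos hp hq), inv_div, mul_div_cancel₀ _ hp.ne']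

theorem ptr_exp_refrigeration_general {n : Type*} [Fintype n] [DecidableEq n]
    (P : Matrix n n ℂ) (hP : P * P = P) (β h : ℝ) :
    ptrAncilla (NormedSpace.exp
        ((-(β : ℂ)) • ((h : ℂ) • ((1 : Matrix n n ℂ) ⊗ₖ ket1bra1) + P ⊗ₖ ket0bra0)))
      = NormedSpace.exp ((-(β : ℂ)) • P)
          + (Real.exp (-(β * h)) : ℂ) • (1 : Matrix n n ℂ) ∧
    ptrAncilla (NormedSpace.exp
        ((-(β : ℂ)) • ((h : ℂ) • ((1 : Matrix n n ℂ) ⊗ₖ ket1bra1) + P ⊗ₖ ket0bra0)))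
      = ((1 + Real.exp (-(β * h)) : ℝ) : ℂ) •
          NormedSpace.exp
            ((-(Real.log ((1 + Real.exp (-(β * h)))
                / (Real.exp (-β) + Real.exp (-(β * h)))) : ℂ)) • P) := by
  have hblock : (-(β : ℂ)) • ((h : ℂ) • ((1 : Matrix n n ℂ) ⊗ₖ ket1bra1) + P ⊗ₖ ket0bra0)
      = blockDiagonal ![(-(β : ℂ)) • P, ((-(β * h) : ℝ) : ℂ) • 1] := by
    rw [← kronecker_ket0bra0_add_kronecker_ket1bra1, smul_kronecker, smul_kronecker]
    push_cast
    module
  have hptr : ptrAncilla (NormedSpace.exp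
        ((-(β : ℂ)) • ((h : ℂ) • ((1 : Matrix n n ℂ) ⊗ₖ ket1bra1) + P ⊗ₖ ket0bra0)))
      = NormedSpace.exp ((-(β : ℂ)) • P) + (Real.exp (-(β * h)) : ℂ) • 1 := by
    rw [hblock, ptrAncilla_exp_blockDiagonal, Fin.sum_univ_two, Matrix.cons_val_zero,
      Matrix.cons_val_one, Matrix.cons_val_zero, exp_smul_one, ← Complex.exp_eq_exp_ℂ,
      Complex.ofReal_exp]
  refine ⟨hptr, hptr.trans ?_⟩
  have hscalar := Real.mul_exp_neg_log_div (p := 1 + Real.exp (-(β * h)))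
    (q := Real.exp (-β) + Real.exp (-(β * h))) (by positivity) (by positivity)
  rw [exp_smul_of_isIdempotentElem hP, exp_smul_of_isIdempotentElem hP, ← Complex.exp_eq_exp_ℂ]
  have hscalarC := congrArg ((↑) : ℝ → ℂ) hscalar
  push_cast at hscalarC ⊢
  match_scalars
  · ring
  · linear_combination -hscalarC

/-- Field-refrigeration gadget: for an orthogonal projector `P` and
`H = h·(I ⊗ |1⟩⟨1|) + P ⊗ |0⟩⟨0|`, tracing out the ancilla of `exp(−βH)` gives
`exp(−βP) + e^{−βh}·I = (1 + e^{−βh})·exp(−β_eff·P)` with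
`β_eff = log((1 + e^{−βh})/(e^{−β} + e^{−βh}))`. -/
theorem ptr_exp_refrigeration {n : Type*} [Fintype n] [DecidableEq n]
    (P : Matrix n n ℂ) (hP : P * P = P) (hP' : Pᴴ = P)
    (β h : ℝ) (hβ : 0 ≤ β) (hh : 0 ≤ h) :
    ptrAncilla (NormedSpace.exp
        ((-(β : ℂ)) • ((h : ℂ) • ((1 : Matrix n n ℂ) ⊗ₖ ket1bra1) + P ⊗ₖ ket0bra0)))
      = NormedSpace.exp ((-(β : ℂ)) • P)
          + (Real.exp (-(β * h)) : ℂ) • (1 : Matrix n n ℂ) ∧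
    ptrAncilla (NormedSpace.exp
        ((-(β : ℂ)) • ((h : ℂ) • ((1 : Matrix n n ℂ) ⊗ₖ ket1bra1) + P ⊗ₖ ket0bra0)))
      = ((1 + Real.exp (-(β * h)) : ℝ) : ℂ) •
          NormedSpace.exp
            ((-(Real.log ((1 + Real.exp (-(β * h)))
                / (Real.exp (-β) + Real.exp (-(β * h)))) : ℂ)) • P) :=
  ptr_exp_refrigeration_general P hP β h
end

section
/- Fix c > 0 and β ∈ (0,1). Let t = ⌈c/β⌉ + 1, h = (1/β)·log(4c/β), and β_eff = t·log((1 + e^{−βh})/(e^{−β} + e^{−βh})). Then β_eff ≥ c. -/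
/-! With `A = e^{-βh} = β/(4c)` and `s = c/t`, the claim `s ≤ log ((1 + A)/(e^{-β} + A))`
unfolds to `A (e^s - 1) ≤ 1 - e^{s-β}`. The choice of `t` gives `s (c + β) ≤ c β`, so
`s < β < 1`; then `e^s - 1 ≤ 2s` and `1 - e^{-(β-s)} ≥ (β-s)/2` reduce it to
`β s / (2c) ≤ (β - s)/2`, which is again `s (c + β) ≤ c β`. -/

open Real

lemma half_le_one_sub_exp_neg {ν : ℝ} (h0 : 0 ≤ ν) (h1 : ν ≤ 1) :
    ν / 2 ≤ 1 - exp (-ν) := by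
  have hexp : exp (-ν) * (1 + ν) ≤ 1 := by
    calc exp (-ν) * (1 + ν) ≤ exp (-ν) * exp ν := by
          gcongr; linarith [add_one_le_exp ν]
      _ = 1 := by rw [← exp_add, neg_add_cancel, exp_zero]
  nlinarith [exp_pos (-ν)]

lemma div_mul_add_le_mul {c β t : ℝ} (hc : 0 ≤ c) (hβ : 0 < β) (ht : c / β + 1 ≤ t) :
    c / t * (c + β) ≤ c * β := by
  have hct : c + β ≤ t * β := by
    have := mul_le_mul_of_nonneg_right ht hβ.le
    rwa [add_mul, div_mul_cancel₀ c hβ.ne', one_mul] at this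
  have htpos : 0 < t := by nlinarith
  calc c / t * (c + β) ≤ c / t * (t * β) := by gcongr
    _ = c * β := by field_simp

lemma le_log_div_of_exp_mul_le {s A D : ℝ} (hA : 0 < A) (hD : 0 ≤ D)
    (h : exp s * (D + A) ≤ 1 + A) : s ≤ log ((1 + A) / (D + A)) := by
  rw [le_log_iff_exp_le (by positivity), le_div_iff₀ (by positivity)]
  exact h

lemma le_log_div_of_mul_add_le {c β s : ℝ} (hc : 0 < c) (hβ : 0 < β) (hβ1 : β < 1)
    (hs : 0 ≤ s) (hsβ : s * (c + β) ≤ c * β) :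
    s ≤ log ((1 + β / (4 * c)) / (exp (-β) + β / (4 * c))) := by
  have hs_lt : s < β := by nlinarith [mul_pos hβ hβ]
  have hexp_s : exp s - 1 ≤ 2 * s := by
    have := abs_exp_sub_one_le (x := s) (by rw [abs_of_nonneg hs]; linarith)
    rwa [abs_of_nonneg (by linarith [add_one_le_exp s]), abs_of_nonneg hs] at this
  have hexp_gap : (β - s) / 2 ≤ 1 - exp (s - β) := by
    simpa using half_le_one_sub_exp_neg (ν := β - s) (by linarith) (by linarith)
  have hkey : β / (4 * c) * (exp s - 1) ≤ 1 - exp (s - β) :=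
    calc β / (4 * c) * (exp s - 1) ≤ β / (4 * c) * (2 * s) := by gcongr
      _ ≤ (β - s) / 2 := by
          rw [div_mul_eq_mul_div, div_le_div_iff₀ (by positivity) two_pos]
          nlinarith
      _ ≤ 1 - exp (s - β) := hexp_gap
  apply le_log_div_of_exp_mul_le (by positivity) (exp_pos _).le
  have hprod : exp s * exp (-β) = exp (s - β) := by rw [← exp_add, sub_eq_add_neg]
  linear_combination hkey + hprod

/-- Effective inverse temperature bound: for `c > 0`, `β ∈ (0,1)`, `t = ⌈c/β⌉ + 1`,
`h = (1/β)·log(4c/β)`, and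
`β_eff = t·log((1 + e^{−βh})/(e^{−β} + e^{−βh}))`, one has `β_eff ≥ c`. -/
theorem beta_eff_ge (c β : ℝ) (hc : 0 < c) (hβ : 0 < β) (hβ1 : β < 1)
    (t : ℕ) (ht : t = ⌈c / β⌉₊ + 1)
    (h : ℝ) (hh : h = 1 / β * Real.log (4 * c / β)) :
    c ≤ (t : ℝ) * Real.log ((1 + Real.exp (-(β * h)))
        / (Real.exp (-β) + Real.exp (-(β * h)))) := by
  have hA : exp (-(β * h)) = β / (4 * c) := by
    rw [hh, ← mul_assoc, mul_one_div_cancel hβ.ne', one_mul, exp_neg,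
      exp_log (by positivity), inv_div]
  have ht_ge : c / β + 1 ≤ (t : ℝ) := by
    rw [ht]; push_cast; gcongr; exact Nat.le_ceil _
  have ht_pos : (0 : ℝ) < t := by linarith [div_nonneg hc.le hβ.le]
  have hs := le_log_div_of_mul_add_le hc hβ hβ1 (by positivity)
    (div_mul_add_le_mul hc.le hβ ht_ge)
  rw [hA]
  calc c = t * (c / t) := by field_simp
    _ ≤ _ := by gcongr
end

section
/- Let Δ ≥ 1/β for some β > 0, set η = σ = √(Δ/β), γ(ω) = exp(−(ω+Δ)²/(2η²)), and f̂(ν) = (2π)^{−1/4}·σ^{−1/2}·exp(−ν²/(4σ²)). Then for any h with 0 ≤ h ≤ 1/β and Δ = 1/β (so η = σ = 1/β), one has ∫_{−∞}^{∞} γ(ω)·f̂(ω+h)² dω = (1/√2)·exp(−(1−βh)²/4) ≥ e^{−1/4}/√2; and for h > 1/β with Δ = h, the integral equals exactly 1/√2. -/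
/-!
Squaring `f̂` makes the integrand a product of two Gaussians, and completing the square gives
the overlap `η / √(η² + σ²) · exp (-(Δ - h)² / (2 (η² + σ²)))`. For `η = σ` the prefactor is
`1/√2`; the exponent vanishes when `Δ = h`, and for `η = σ = Δ = 1/β` it is `-(1 - βh)²/4`,
which is at least `-1/4` as long as `0 ≤ βh ≤ 1`.
-/

open Real MeasureTheory

/-- The Gaussian overlap `∫ γ(ω)·f̂(ω+h)² dω`, where
`γ(ω) = exp(−(ω+Δ)²/(2η²))` and `f̂(ν) = (2π)^{−1/4}·σ^{−1/2}·exp(−ν²/(4σ²))`. -/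
noncomputable def gaussOverlap (σ η Δ h : ℝ) : ℝ :=
  ∫ ω : ℝ, Real.exp (-(ω + Δ) ^ 2 / (2 * η ^ 2)) *
    ((2 * Real.pi) ^ (-(1 / 4) : ℝ) * σ ^ (-(1 / 2) : ℝ)
      * Real.exp (-(ω + h) ^ 2 / (4 * σ ^ 2))) ^ 2

theorem integral_exp_neg_mul_sq_mul_exp_neg_mul_sq {a b : ℝ} (hab : a + b ≠ 0) (μ ν : ℝ) :
    ∫ x : ℝ, exp (-a * (x - μ) ^ 2) * exp (-b * (x - ν) ^ 2)
      = √(π / (a + b)) * exp (-(a * b / (a + b)) * (μ - ν) ^ 2) := by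
  have complete_square : ∀ x : ℝ, exp (-a * (x - μ) ^ 2) * exp (-b * (x - ν) ^ 2)
      = exp (-(a * b / (a + b)) * (μ - ν) ^ 2)
        * exp (-(a + b) * (x - (a * μ + b * ν) / (a + b)) ^ 2) := by
    intro x
    rw [← exp_add, ← exp_add]
    congr 1
    field_simp
    ring
  simp_rw [complete_square]
  rw [integral_const_mul, integral_sub_right_eq_self (fun x => exp (-(a + b) * x ^ 2)),
    integral_gaussian, mul_comm]

theorem gaussOverlap_eq {σ η : ℝ} (hσ : 0 < σ) (hη : 0 < η) (Δ h : ℝ) :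
    gaussOverlap σ η Δ h = η / √(η ^ 2 + σ ^ 2) * exp (-(Δ - h) ^ 2 / (2 * (η ^ 2 + σ ^ 2))) := by
  set a := 1 / (2 * η ^ 2)
  set b := 1 / (2 * σ ^ 2)
  have hab : a + b = (η ^ 2 + σ ^ 2) / (2 * η ^ 2 * σ ^ 2) := by
    simp only [a, b]; field_simp; ring
  have hnorm : ((2 * π) ^ (-(1 / 4) : ℝ) * σ ^ (-(1 / 2) : ℝ)) ^ 2 = (√(2 * π))⁻¹ * σ⁻¹ := by
    rw [mul_pow, ← rpow_natCast, ← rpow_natCast, ← rpow_mul (by positivity),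
      ← rpow_mul hσ.le, sqrt_eq_rpow, ← rpow_neg (by positivity)]
    norm_num [rpow_neg_one]
  have integrand : ∀ ω : ℝ, exp (-(ω + Δ) ^ 2 / (2 * η ^ 2)) *
      ((2 * π) ^ (-(1 / 4) : ℝ) * σ ^ (-(1 / 2) : ℝ) * exp (-(ω + h) ^ 2 / (4 * σ ^ 2))) ^ 2
      = (√(2 * π))⁻¹ * σ⁻¹ * (exp (-a * (ω - -Δ) ^ 2) * exp (-b * (ω - -h) ^ 2)) := by
    intro ω
    rw [mul_pow, hnorm, ← exp_nat_mul]
    simp only [a, b, sub_neg_eq_add]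
    rw [show -(1 / (2 * η ^ 2)) * (ω + Δ) ^ 2 = -(ω + Δ) ^ 2 / (2 * η ^ 2) by ring,
      show -(1 / (2 * σ ^ 2)) * (ω + h) ^ 2 = ((2 : ℕ) : ℝ) * (-(ω + h) ^ 2 / (4 * σ ^ 2)) by
        push_cast; ring]
    ring
  have hsqrt : √(π / (a + b)) = √(2 * π) * (η * σ) / √(η ^ 2 + σ ^ 2) := by
    rw [hab, ← sqrt_sq (by positivity : 0 ≤ η * σ), ← sqrt_mul (by positivity),
      ← sqrt_div' _ (by positivity)]
    congr 1
    field_simp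
  have hrate : a * b / (a + b) = 1 / (2 * (η ^ 2 + σ ^ 2)) := by
    rw [hab]; simp only [a, b]; field_simp
  unfold gaussOverlap
  simp_rw [integrand]
  rw [integral_const_mul, integral_exp_neg_mul_sq_mul_exp_neg_mul_sq (by positivity), hsqrt,
    hrate, show -(1 / (2 * (η ^ 2 + σ ^ 2))) * (-Δ - -h) ^ 2
      = -(Δ - h) ^ 2 / (2 * (η ^ 2 + σ ^ 2)) by ring]
  have : 0 < √(2 * π) := by positivity
  field_simp

theorem gaussOverlap_self {s : ℝ} (hs : 0 < s) (Δ h : ℝ) :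
    gaussOverlap s s Δ h = 1 / √2 * exp (-(Δ - h) ^ 2 / (4 * s ^ 2)) := by
  have hsqrt : √(s ^ 2 + s ^ 2) = √2 * s := by
    rw [← two_mul, sqrt_mul zero_le_two, sqrt_sq hs.le]
  rw [gaussOverlap_eq hs hs, hsqrt]
  field_simp
  ring_nf

/-- Dissipative contraction overlaps. For `β > 0` and `0 ≤ h`:
if `h ≤ 1/β` (with `Δ = 1/β`, `η = σ = 1/β`) the overlap equals
`(1/√2)·exp(−(1−βh)²/4) ≥ e^{−1/4}/√2`; if `h > 1/β` (with `Δ = h`,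
`η = σ = √(h/β)`) the overlap equals `1/√2`. -/
theorem gaussOverlap_eval (β h : ℝ) (hβ : 0 < β) (hh : 0 ≤ h) :
    (h ≤ 1 / β →
      gaussOverlap (1 / β) (1 / β) (1 / β) h
          = 1 / Real.sqrt 2 * Real.exp (-(1 - β * h) ^ 2 / 4) ∧
      Real.exp (-(1 / 4)) / Real.sqrt 2 ≤ gaussOverlap (1 / β) (1 / β) (1 / β) h) ∧
    (1 / β < h →
      gaussOverlap (Real.sqrt (h / β)) (Real.sqrt (h / β)) h h = 1 / Real.sqrt 2) := by
  constructor
  · intro h_le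
    have h_eq : gaussOverlap (1 / β) (1 / β) (1 / β) h = 1 / √2 * exp (-(1 - β * h) ^ 2 / 4) := by
      rw [gaussOverlap_self (by positivity)]
      field_simp
    have hβh : β * h ≤ 1 := by rwa [le_div_iff₀' hβ] at h_le
    have h_sq : (1 - β * h) ^ 2 ≤ 1 := by nlinarith [mul_nonneg hβ.le hh]
    refine ⟨h_eq, ?_⟩
    rw [h_eq, div_eq_inv_mul, ← one_div]
    gcongr
    linarith
  · intro h_lt
    have hs : 0 < √(h / β) := sqrt_pos.mpr (div_pos ((one_div_pos.mpr hβ).trans h_lt) hβ)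
    simp [gaussOverlap_self hs]
end

section
/- Let ν₁, ν₂ ∈ ℝ and set s₊ = ν₁ + ν₂, s₋ = ν₁ − ν₂. Then (ω − ν₁)² + (ω − ν₂)² = 2(ω − s₊/2)² + s₋²/2 for all ω ∈ ℝ; consequently, for σ, η, Δ, β > 0 with β(η² + σ²) = 2Δ, the quantity α(ν₁,ν₂) := exp(−s₋²/(8σ²))·(η/√(η²+σ²))·exp(−(Δ + s₊/2)²/(2(η²+σ²))) satisfies the KMS symmetry α(ν₁,ν₂)·e^{β(ν₁+ν₂)/2} = α(−ν₂,−ν₁). -/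
open Real

theorem sq_sub_add_sq_sub {K : Type*} [Field K] [NeZero (2 : K)] (ω a b : K) :
    (ω - a) ^ 2 + (ω - b) ^ 2 = 2 * (ω - (a + b) / 2) ^ 2 + (a - b) ^ 2 / 2 := by
  field_simp
  ring

/-- The cross terms `∓Δ s / (2κ)` of the two exponents differ by `Δ s / κ = β s / 2`. -/
theorem exp_neg_sq_div_mul_exp_eq {κ Δ β : ℝ} (hκ : κ ≠ 0) (hβ : β * κ = 2 * Δ) (s : ℝ) :
    exp (-(Δ + s / 2) ^ 2 / (2 * κ)) * exp (β * s / 2) = exp (-(Δ - s / 2) ^ 2 / (2 * κ)) := by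
  rw [← exp_add]
  congr 1
  field_simp
  linear_combination 4 * s * hβ

theorem kms_symmetry_general (σ η Δ β : ℝ) (hη : 0 < η) (hdb : β * (η ^ 2 + σ ^ 2) = 2 * Δ)
    (α : ℝ → ℝ → ℝ)
    (hα : ∀ ν₁ ν₂ : ℝ, α ν₁ ν₂
      = Real.exp (-(ν₁ - ν₂) ^ 2 / (8 * σ ^ 2))
        * (η / Real.sqrt (η ^ 2 + σ ^ 2))
        * Real.exp (-(Δ + (ν₁ + ν₂) / 2) ^ 2 / (2 * (η ^ 2 + σ ^ 2)))) :
    (∀ ω ν₁ ν₂ : ℝ,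
      (ω - ν₁) ^ 2 + (ω - ν₂) ^ 2
        = 2 * (ω - (ν₁ + ν₂) / 2) ^ 2 + (ν₁ - ν₂) ^ 2 / 2) ∧
    ∀ ν₁ ν₂ : ℝ,
      α ν₁ ν₂ * Real.exp (β * (ν₁ + ν₂) / 2) = α (-ν₂) (-ν₁) := by
  refine ⟨sq_sub_add_sq_sub, fun ν₁ ν₂ => ?_⟩
  have hκ : η ^ 2 + σ ^ 2 ≠ 0 := by positivity
  rw [hα, hα, mul_assoc, exp_neg_sq_div_mul_exp_eq hκ hdb]
  congr 4 <;> ring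

/-- Completing the square in Bohr frequencies, and the resulting KMS symmetry:
for `s₊ = ν₁ + ν₂`, `s₋ = ν₁ − ν₂`, one has
`(ω−ν₁)² + (ω−ν₂)² = 2(ω−s₊/2)² + s₋²/2`, and if `β(η²+σ²) = 2Δ` then
`α(ν₁,ν₂)·e^{β(ν₁+ν₂)/2} = α(−ν₂,−ν₁)` where
`α(ν₁,ν₂) = exp(−s₋²/(8σ²))·(η/√(η²+σ²))·exp(−(Δ+s₊/2)²/(2(η²+σ²)))`. -/
theorem kms_symmetry (σ η Δ β : ℝ) (hσ : 0 < σ) (hη : 0 < η) (hΔ : 0 < Δ)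
    (hβ : 0 < β) (hdb : β * (η ^ 2 + σ ^ 2) = 2 * Δ)
    (α : ℝ → ℝ → ℝ)
    (hα : ∀ ν₁ ν₂ : ℝ, α ν₁ ν₂
      = Real.exp (-(ν₁ - ν₂) ^ 2 / (8 * σ ^ 2))
        * (η / Real.sqrt (η ^ 2 + σ ^ 2))
        * Real.exp (-(Δ + (ν₁ + ν₂) / 2) ^ 2 / (2 * (η ^ 2 + σ ^ 2)))) :
    (∀ ω ν₁ ν₂ : ℝ,
      (ω - ν₁) ^ 2 + (ω - ν₂) ^ 2
        = 2 * (ω - (ν₁ + ν₂) / 2) ^ 2 + (ν₁ - ν₂) ^ 2 / 2) ∧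
    ∀ ν₁ ν₂ : ℝ,
      α ν₁ ν₂ * Real.exp (β * (ν₁ + ν₂) / 2) = α (-ν₂) (-ν₁) :=
  kms_symmetry_general σ η Δ β hη hdb α hα
end
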